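/- Let g : ℕ → ℝ be a nonnegative function and set p(n) := n^{−g(n)}. There exists an absolute constant N ∈ ℕ such that for every n ≥ N and every integer k with 2 ≤ k, k⁴ ≤ n, and g(n)·k⁴ ≤ 1 (i.e. k ≤ min{n^{1/4}, g(n)^{−1/4}}), the probability that the Erdős–Rényi random graph G(n,p(n)) contains no elementary k-clique is at most exp(−n^{1/2}). -/

import Mathlib

open MeasureTheory
open scoped Classical

noncomputable def bernoulliMeasure (p : ℝ) : Measure Bool :=
  (PMF.bernoulli (min (Real.toNNReal p) 1) (min_le_right _ _)).toMeasure

noncomputable def erdosRenyi (n : ℕ) (p : ℝ) : Measure (Sym2 (Fin n) → Bool) :=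
  Measure.pi fun _ => bernoulliMeasure p

def IsCompleteOn {n : ℕ} (ω : Sym2 (Fin n) → Bool) (S : Finset (Fin n)) : Prop :=
  ∀ u ∈ S, ∀ v ∈ S, u ≠ v → ω s(u, v) = true

noncomputable def cliqueCount (n s : ℕ) (ω : Sym2 (Fin n) → Bool) : ℕ :=
  (Finset.univ.filter fun S : Finset (Fin n) => S.card = s ∧ IsCompleteOn ω S).card

/-- The `j`-th elementary block `{jk, jk+1, …, (j+1)k − 1}` inside `{0,…,n−1}`. -/
def elementaryBlock (n k j : ℕ) : Finset (Fin n) :=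
  Finset.univ.filter fun v : Fin n => j * k ≤ (v : ℕ) ∧ (v : ℕ) < (j + 1) * k

/-- A graph (encoded by its edge indicators `ω`) has an elementary `k`-clique if for some
`j ∈ {0,…,⌊n/k⌋−1}` the block `{jk,…,(j+1)k−1}` is complete. -/
def HasElementaryClique (n k : ℕ) (ω : Sym2 (Fin n) → Bool) : Prop :=
  ∃ j < n / k, IsCompleteOn ω (elementaryBlock n k j)

/-
The blocks of vertices `{jk, …, (j+1)k − 1}`, `j < ⌊n/k⌋`, span pairwise disjoint sets of edges, so
the events "block `j` is complete" are independent, and each has probability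
`p ^ (k choose 2) = n ^ (-g(n) (k choose 2)) ≥ n ^ (-1/8)` because `g(n) k⁴ ≤ 1`. Hence no block is
complete with probability at most `(1 - n^(-1/8)) ^ ⌊n/k⌋ ≤ exp (-⌊n/k⌋ n^(-1/8))`, and
`⌊n/k⌋ ≥ n / (2k) ≥ n^(3/4) / 2` makes the exponent at least `n^(5/8) / 2 ≥ √n` once `n ≥ 2⁸`.
-/

open MeasureTheory Finset

lemma Finset.restrict_preimage_image_of_dependsOn {ι : Type*} {Ω : ι → Type*} {S : Finset ι}
    {A : Set (Π i, Ω i)} (hA : DependsOn (· ∈ A) S) : S.restrict ⁻¹' (S.restrict '' A) = A := by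
  refine Set.Subset.antisymm ?_ (Set.subset_preimage_image _ _)
  rintro x ⟨a, ha, hax⟩
  exact (eq_iff_iff.mp (hA fun i hi => congrFun hax ⟨i, hi⟩)).mp ha

section ProductMeasure

variable {ι : Type*} [Fintype ι] {Ω : ι → Type*} [∀ i, MeasurableSpace (Ω i)]
  [∀ i, Countable (Ω i)] [∀ i, MeasurableSingletonClass (Ω i)]
  {μ : (i : ι) → Measure (Ω i)} [∀ i, IsProbabilityMeasure (μ i)]

lemma measure_pi_inter_eq_mul_of_dependsOn {S T : Finset ι} (hST : Disjoint S T)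
    {A B : Set (Π i, Ω i)} (hA : DependsOn (· ∈ A) S) (hB : DependsOn (· ∈ B) T) :
    Measure.pi μ (A ∩ B) = Measure.pi μ A * Measure.pi μ B := by
  have hindep : ProbabilityTheory.IndepFun S.restrict T.restrict (Measure.pi μ) :=
    (ProbabilityTheory.iIndepFun_pi (X := fun _ => id) fun _ => aemeasurable_id).indepFun_finset
      S T hST fun i => measurable_pi_apply i
  rw [← restrict_preimage_image_of_dependsOn hA, ← restrict_preimage_image_of_dependsOn hB]
  exact hindep.measure_inter_preimage_eq_mul _ _
    (Set.to_countable _).measurableSet (Set.to_countable _).measurableSet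

lemma measure_pi_biInter_eq_prod_of_dependsOn {κ : Type*} (J : Finset κ) {S : κ → Finset ι}
    (hS : (J : Set κ).PairwiseDisjoint S) {A : κ → Set (Π i, Ω i)}
    (hA : ∀ j ∈ J, DependsOn (· ∈ A j) (S j)) :
    Measure.pi μ (⋂ j ∈ J, A j) = ∏ j ∈ J, Measure.pi μ (A j) := by
  induction J using Finset.induction_on with
  | empty => simp
  | insert a J ha ih =>
    have hdisj : Disjoint (S a) (J.biUnion S) :=
      (disjoint_biUnion_right _ _ _).2 fun j hj =>
        hS (mem_insert_self a J) (mem_insert_of_mem hj) (ne_of_mem_of_not_mem hj ha).symm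
    have hrest : DependsOn (· ∈ ⋂ j ∈ J, A j) (J.biUnion S) := fun x y hxy => by
      simp only [Set.mem_iInter, eq_iff_iff]
      exact forall₂_congr fun j hj => eq_iff_iff.mp <|
        hA j (mem_insert_of_mem hj) fun i hi => hxy i (mem_biUnion.2 ⟨j, hj, hi⟩)
    rw [set_biInter_insert, prod_insert ha,
      measure_pi_inter_eq_mul_of_dependsOn hdisj (hA a (mem_insert_self a J)) hrest,
      ih (hS.subset (by simp)) fun j hj => hA j (mem_insert_of_mem hj)]

end ProductMeasure

instance (p : ℝ) : IsProbabilityMeasure (bernoulliMeasure p) :=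
  PMF.toMeasure.isProbabilityMeasure _

instance (n : ℕ) (p : ℝ) : IsProbabilityMeasure (erdosRenyi n p) := by
  unfold erdosRenyi
  infer_instance

lemma bernoulliMeasure_singleton_true {p : ℝ} (hp : p ≤ 1) :
    bernoulliMeasure p {true} = ENNReal.ofReal p := by
  rw [bernoulliMeasure, PMF.toMeasure_apply_singleton _ _ (measurableSet_singleton _)]
  exact congrArg ENNReal.ofNNReal (min_eq_left (Real.toNNReal_le_one.mpr hp))

section InternalEdges

variable {α : Type*} [DecidableEq α]

def internalEdges (S : Finset α) : Finset (Sym2 α) :=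
  S.offDiag.image Sym2.mk.uncurry

lemma card_internalEdges (S : Finset α) : #(internalEdges S) = (#S).choose 2 :=
  Sym2.card_image_offDiag S

lemma disjoint_internalEdges {S T : Finset α} (h : Disjoint S T) :
    Disjoint (internalEdges S) (internalEdges T) := by
  simp only [internalEdges, disjoint_left, mem_image, mem_offDiag, Prod.exists,
    Function.uncurry_apply_pair, not_exists, not_and]
  rintro _ ⟨a, b, ⟨ha, -, -⟩, rfl⟩ c d ⟨hc, hd, -⟩ hcd
  rcases Sym2.mem_iff.1 (hcd ▸ Sym2.mem_mk_left a b) with rfl | rfl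
  · exact disjoint_left.1 h ha hc
  · exact disjoint_left.1 h ha hd

end InternalEdges

section Blocks

variable {n : ℕ}

lemma isCompleteOn_iff_forall_internalEdges (ω : Sym2 (Fin n) → Bool) (S : Finset (Fin n)) :
    IsCompleteOn ω S ↔ ∀ z ∈ internalEdges S, ω z = true := by
  simp only [IsCompleteOn, internalEdges, forall_mem_image, mem_offDiag, Prod.forall,
    Function.uncurry_apply_pair, and_imp]
  exact ⟨fun h a b ha hb => h a ha b hb, fun h a ha b hb => h a b ha hb⟩

lemma dependsOn_not_isCompleteOn (S : Finset (Fin n)) :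
    DependsOn (fun ω => ¬ IsCompleteOn ω S) (internalEdges S) := fun ω ω' h => by
  simp only [isCompleteOn_iff_forall_internalEdges, eq_iff_iff]
  exact not_congr <| forall₂_congr fun z hz => by rw [h z hz]

lemma erdosRenyi_isCompleteOn {p : ℝ} (hp : p ≤ 1) (S : Finset (Fin n)) :
    erdosRenyi n p {ω | IsCompleteOn ω S} = ENNReal.ofReal p ^ (#S).choose 2 := by
  have : {ω | IsCompleteOn ω S} = (internalEdges S : Set (Sym2 (Fin n))).pi fun _ => {true} := by
    ext ω
    simp [isCompleteOn_iff_forall_internalEdges, Set.mem_pi]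
  rw [this, erdosRenyi, Measure.pi_pi_finset, prod_const, bernoulliMeasure_singleton_true hp,
    card_internalEdges]

lemma card_elementaryBlock_le (n k j : ℕ) : #(elementaryBlock n k j) ≤ k := by
  calc #(elementaryBlock n k j) ≤ #(Ico (j * k) ((j + 1) * k)) :=
        card_le_card_of_injOn Fin.val (fun v hv => by simpa [elementaryBlock] using hv)
          Fin.val_injective.injOn
    _ = k := by rw [Nat.card_Ico, add_mul, one_mul, Nat.add_sub_cancel_left]

lemma disjoint_elementaryBlock {k i j : ℕ} (hij : i ≠ j) :
    Disjoint (elementaryBlock n k i) (elementaryBlock n k j) := by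
  simp only [elementaryBlock, disjoint_left, mem_filter, mem_univ, true_and, not_and]
  intro v hi hj hj'
  exact absurd ((Nat.div_eq_of_lt_le hi.1 hi.2).symm.trans (Nat.div_eq_of_lt_le hj hj')) hij

lemma erdosRenyi_not_hasElementaryClique_eq_prod (n k : ℕ) (p : ℝ) :
    erdosRenyi n p {ω | ¬ HasElementaryClique n k ω} =
      ∏ j ∈ range (n / k), erdosRenyi n p {ω | ¬ IsCompleteOn ω (elementaryBlock n k j)} := by
  have : {ω | ¬ HasElementaryClique n k ω} =
      ⋂ j ∈ range (n / k), {ω | ¬ IsCompleteOn ω (elementaryBlock n k j)} := by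
    ext ω
    simp [HasElementaryClique]
  rw [this, erdosRenyi]
  exact measure_pi_biInter_eq_prod_of_dependsOn _
    (fun i _ j _ hij => disjoint_internalEdges (disjoint_elementaryBlock hij))
    fun j _ => dependsOn_not_isCompleteOn _

end Blocks

lemma erdosRenyi_not_isCompleteOn_le {n : ℕ} (hn : 0 < n) {c a : ℝ} (hc : 0 ≤ c)
    {S : Finset (Fin n)} (h : c * (#S).choose 2 ≤ a) :
    erdosRenyi n ((n : ℝ) ^ (-c)) {ω | ¬ IsCompleteOn ω S} ≤
      1 - ENNReal.ofReal ((n : ℝ) ^ (-a)) := by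
  have hn1 : (1 : ℝ) ≤ n := by exact_mod_cast hn
  rw [← Set.compl_ofPred, prob_compl_eq_one_sub (Set.to_countable _).measurableSet,
    erdosRenyi_isCompleteOn (Real.rpow_le_one_of_one_le_of_nonpos hn1 (neg_nonpos.2 hc)),
    ← ENNReal.ofReal_pow (by positivity), ← Real.rpow_natCast, ← Real.rpow_mul (by positivity)]
  refine tsub_le_tsub_left (ENNReal.ofReal_le_ofReal ?_) 1
  exact Real.rpow_le_rpow_of_exponent_le hn1 (by linarith)

lemma mul_choose_two_le {c : ℝ} {s k : ℕ} (hc : 0 ≤ c) (hs : s ≤ k) (hk : c * k ^ 4 ≤ 1) :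
    c * s.choose 2 ≤ 1 / 8 := by
  have hchoose : 8 * (k.choose 2 : ℝ) ≤ k ^ 4 := by
    have hk0 : (0 : ℝ) ≤ k := k.cast_nonneg
    rw [Nat.cast_choose_two]
    nlinarith [mul_nonneg (sq_nonneg (k : ℝ)) (sq_nonneg ((k : ℝ) - 2)),
      mul_nonneg hk0 (sq_nonneg ((k : ℝ) - 1))]
  have hs' : (s.choose 2 : ℝ) ≤ k.choose 2 := by exact_mod_cast Nat.choose_le_choose 2 hs
  nlinarith [mul_le_mul_of_nonneg_left hs' hc, mul_le_mul_of_nonneg_left hchoose hc]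

lemma ENNReal.one_sub_ofReal_pow_le_ofReal_exp {τ : ℝ} (h0 : 0 ≤ τ) (h1 : τ ≤ 1) (m : ℕ) :
    (1 - ENNReal.ofReal τ) ^ m ≤ ENNReal.ofReal (Real.exp (-(m * τ))) := by
  rw [← ENNReal.ofReal_one, ← ENNReal.ofReal_sub _ h0, ← ENNReal.ofReal_pow (by linarith)]
  refine ENNReal.ofReal_le_ofReal ?_
  calc (1 - τ) ^ m ≤ Real.exp (-τ) ^ m :=
        pow_le_pow_left₀ (by linarith) (Real.one_sub_le_exp_neg τ) m
    _ = Real.exp (-(m * τ)) := by rw [← Real.exp_nat_mul]; ring_nf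

lemma sqrt_le_div_mul_rpow_neg_one_eighth {n k : ℕ} (hn : 2 ^ 8 ≤ n) (hk : 0 < k)
    (hkn : k ^ 4 ≤ n) :
    √n ≤ (n / k : ℕ) * (n : ℝ) ^ (-(1 / 8 : ℝ)) := by
  set x : ℝ := (n : ℝ) ^ (1 / 8 : ℝ)
  have hx0 : 0 < x := by positivity
  have hx : x ^ 8 = n := by
    rw [← Real.rpow_natCast, ← Real.rpow_mul n.cast_nonneg]
    norm_num
  have hx2 : 2 ≤ x := by
    refine le_of_pow_le_pow_left₀ (n := 8) (by norm_num) hx0.le ?_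
    rw [hx]
    exact_mod_cast hn
  have hkx : (k : ℝ) ≤ x ^ 2 := by
    refine le_of_pow_le_pow_left₀ (n := 4) (by norm_num) (by positivity) ?_
    rw [← pow_mul, hx]
    exact_mod_cast hkn
  have hm : (n : ℝ) ≤ 2 * k * (n / k : ℕ) := by
    have hq : k ≤ k * (n / k) :=
      Nat.le_mul_of_pos_right k (Nat.div_pos (le_trans (Nat.le_self_pow (by norm_num) k) hkn) hk)
    have hdiv := Nat.div_add_mod n k
    have hmod := Nat.mod_lt n hk
    have hnat : n ≤ 2 * k * (n / k) := by nlinarith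
    exact_mod_cast hnat
  have hsqrt : √(n : ℝ) = x ^ 4 := by
    rw [← hx, show x ^ 8 = (x ^ 4) ^ 2 by ring, Real.sqrt_sq (by positivity)]
  rw [hsqrt, Real.rpow_neg n.cast_nonneg, ← div_eq_mul_inv, le_div_iff₀ hx0]
  have h6 : x ^ 6 ≤ 2 * (n / k : ℕ) := by
    refine le_of_mul_le_mul_left ?_ (by positivity : 0 < x ^ 2)
    nlinarith [mul_le_mul_of_nonneg_right hkx (by positivity : (0 : ℝ) ≤ 2 * (n / k : ℕ))]
  nlinarith [mul_le_mul_of_nonneg_right hx2 (pow_pos hx0 5).le]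

/-- For `p(n) = n^{−g(n)}` with `g ≥ 0`, there is an absolute constant `N` such
that for all `n ≥ N` and all `k` with `2 ≤ k`, `k⁴ ≤ n` and `g(n)·k⁴ ≤ 1`, the probability
that `G(n, p(n))` contains no elementary `k`-clique is at most `exp(−n^{1/2})`. -/
theorem erdosRenyi_prob_no_elementaryClique_le_exp
    (g : ℕ → ℝ) (hg : ∀ n, 0 ≤ g n) :
    ∃ N : ℕ, ∀ n ≥ N, ∀ k : ℕ, 2 ≤ k → k ^ 4 ≤ n → g n * (k : ℝ) ^ 4 ≤ 1 →
      erdosRenyi n ((n : ℝ) ^ (-(g n)))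
          {ω : Sym2 (Fin n) → Bool | ¬ HasElementaryClique n k ω} ≤
        ENNReal.ofReal (Real.exp (-Real.sqrt n)) := by
  refine ⟨2 ^ 8, fun n hn k hk hkn hgk => ?_⟩
  have hn0 : 0 < n := lt_of_lt_of_le (by norm_num) hn
  set τ : ℝ := (n : ℝ) ^ (-(1 / 8 : ℝ))
  have hτ1 : τ ≤ 1 :=
    Real.rpow_le_one_of_one_le_of_nonpos (by exact_mod_cast hn0) (by norm_num)
  calc _ = ∏ j ∈ range (n / k), erdosRenyi n ((n : ℝ) ^ (-g n))
          {ω | ¬ IsCompleteOn ω (elementaryBlock n k j)} :=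
        erdosRenyi_not_hasElementaryClique_eq_prod n k _
    _ ≤ (1 - ENNReal.ofReal τ) ^ #(range (n / k)) :=
        prod_le_pow_card _ _ _ fun j _ => erdosRenyi_not_isCompleteOn_le hn0 (hg n)
          (mul_choose_two_le (hg n) (card_elementaryBlock_le n k j) hgk)
    _ ≤ ENNReal.ofReal (Real.exp (-((n / k : ℕ) * τ))) := by
        simpa only [card_range] using
          ENNReal.one_sub_ofReal_pow_le_ofReal_exp (by positivity) hτ1 (n / k)
    _ ≤ _ := ENNReal.ofReal_le_ofReal <| Real.exp_le_exp.2 <| neg_le_neg <|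
        sqrt_le_div_mul_rpow_neg_one_eighth hn (by omega) hkn
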